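/- The function h ↦ ∫_{−1}^{1} √(max(2(h−x)(1−x²), 0))/(1−x²) dx tends to +∞ as h → +∞ (i.e. it tends to the filter atTop along atTop). -/
import Mathlib


open MeasureTheory intervalIntegral Filter

private lemma sqrt_inv_sum_integrable :
    IntervalIntegrable
      (fun x : ℝ => (1 - x) ^ (-(1/2) : ℝ) + (1 + x) ^ (-(1/2) : ℝ)) volume (-1) 1 := by
  have h0 : IntervalIntegrable (fun x : ℝ => x ^ (-(1/2) : ℝ)) volume 0 2 :=
    intervalIntegrable_rpow' (by norm_num)
  have h1 : IntervalIntegrable (fun x : ℝ => (1 - x) ^ (-(1/2) : ℝ)) volume (-1) 1 := by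
    have := h0.comp_sub_left 1
    norm_num at this
    exact this.symm
  have h2 : IntervalIntegrable (fun x : ℝ => (1 + x) ^ (-(1/2) : ℝ)) volume (-1) 1 := by
    have := h0.comp_add_left 1
    norm_num at this
    exact this
  exact h1.add h2

private lemma action_integrable (h : ℝ) :
    IntervalIntegrable
      (fun x : ℝ => Real.sqrt (max (2 * (h - x) * (1 - x ^ 2)) 0) / (1 - x ^ 2))
      volume (-1) 1 := by
  set C : ℝ := Real.sqrt (2 * (|h| + 1)) with hC
  have hC0 : 0 ≤ C := Real.sqrt_nonneg _
  apply IntervalIntegrable.mono_fun' (g := fun x : ℝ =>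
      C * ((1 - x) ^ (-(1/2) : ℝ) + (1 + x) ^ (-(1/2) : ℝ)))
    (sqrt_inv_sum_integrable.const_mul C)
  · apply Measurable.aestronglyMeasurable
    fun_prop
  · rw [Filter.EventuallyLE, ae_restrict_iff' measurableSet_uIoc]
    refine Filter.Eventually.of_forall fun x hx => ?_
    rw [Set.uIoc_of_le (by norm_num : (-1:ℝ) ≤ 1)] at hx
    obtain ⟨hx1, hx2⟩ := hx
    rcases eq_or_lt_of_le hx2 with rfl | hx2
    · simp only [one_pow, sub_self, div_zero, norm_zero]
      positivity
    -- now -1 < x < 1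
    have ht : (0:ℝ) < 1 - x ^ 2 := by nlinarith
    have h1x : (0:ℝ) < 1 - x := by linarith
    have h2x : (0:ℝ) < 1 + x := by linarith
    have hmax : max (2 * (h - x) * (1 - x ^ 2)) 0 ≤ 2 * (|h| + 1) * (1 - x ^ 2) := by
      apply max_le
      · have : h - x ≤ |h| + 1 := by
          have := le_abs_self h; linarith
        nlinarith
      · positivity
    have key : Real.sqrt (max (2 * (h - x) * (1 - x ^ 2)) 0) / (1 - x ^ 2)
        ≤ C / Real.sqrt (1 - x ^ 2) := by
      have hs : Real.sqrt (max (2 * (h - x) * (1 - x ^ 2)) 0)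
          ≤ C * Real.sqrt (1 - x ^ 2) := by
        rw [hC, ← Real.sqrt_mul (by positivity)]
        exact Real.sqrt_le_sqrt hmax
      calc Real.sqrt (max (2 * (h - x) * (1 - x ^ 2)) 0) / (1 - x ^ 2)
          ≤ C * Real.sqrt (1 - x ^ 2) / (1 - x ^ 2) :=
            div_le_div_of_nonneg_right hs ht.le
        _ = C / Real.sqrt (1 - x ^ 2) := by
            rw [div_eq_div_iff ht.ne' (Real.sqrt_pos.mpr ht).ne']
            rw [mul_assoc, Real.mul_self_sqrt ht.le]
    have hsplit : Real.sqrt (1 - x ^ 2) = Real.sqrt (1 - x) * Real.sqrt (1 + x) := by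
      rw [← Real.sqrt_mul h1x.le]; ring_nf
    have hbound : C / Real.sqrt (1 - x ^ 2)
        ≤ C * ((1 - x) ^ (-(1/2) : ℝ) + (1 + x) ^ (-(1/2) : ℝ)) := by
      rw [div_eq_mul_inv]
      apply mul_le_mul_of_nonneg_left _ hC0
      rw [hsplit]
      have e1 : (1 - x) ^ (-(1/2) : ℝ) = (Real.sqrt (1 - x))⁻¹ := by
        rw [Real.rpow_neg h1x.le, Real.sqrt_eq_rpow]
      have e2 : (1 + x) ^ (-(1/2) : ℝ) = (Real.sqrt (1 + x))⁻¹ := by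
        rw [Real.rpow_neg h2x.le, Real.sqrt_eq_rpow]
      rw [e1, e2, mul_inv]
      rcases le_total x 0 with hx0 | hx0
      · have : (1:ℝ) ≤ Real.sqrt (1 - x) := by
          have := Real.sqrt_le_sqrt (show (1:ℝ) ≤ 1 - x by linarith)
          simpa using this
        have hs2 : 0 < Real.sqrt (1 + x) := Real.sqrt_pos.mpr h2x
        have : (Real.sqrt (1 - x))⁻¹ * (Real.sqrt (1 + x))⁻¹ ≤ (Real.sqrt (1 + x))⁻¹ := by
          have h1 : (Real.sqrt (1 - x))⁻¹ ≤ 1 := by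
            rw [inv_le_one_iff₀]; right; exact this
          calc (Real.sqrt (1 - x))⁻¹ * (Real.sqrt (1 + x))⁻¹
              ≤ 1 * (Real.sqrt (1 + x))⁻¹ := by
                apply mul_le_mul_of_nonneg_right h1 (by positivity)
            _ = (Real.sqrt (1 + x))⁻¹ := one_mul _
        have hpos : 0 ≤ (Real.sqrt (1 - x))⁻¹ := by positivity
        linarith
      · have : (1:ℝ) ≤ Real.sqrt (1 + x) := by
          have := Real.sqrt_le_sqrt (show (1:ℝ) ≤ 1 + x by linarith)
          simpa using this
        have : (Real.sqrt (1 - x))⁻¹ * (Real.sqrt (1 + x))⁻¹ ≤ (Real.sqrt (1 - x))⁻¹ := by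
          have h1 : (Real.sqrt (1 + x))⁻¹ ≤ 1 := by
            rw [inv_le_one_iff₀]; right; exact this
          calc (Real.sqrt (1 - x))⁻¹ * (Real.sqrt (1 + x))⁻¹
              ≤ (Real.sqrt (1 - x))⁻¹ * 1 := by
                apply mul_le_mul_of_nonneg_left h1 (by positivity)
            _ = (Real.sqrt (1 - x))⁻¹ := mul_one _
        have hpos : 0 ≤ (Real.sqrt (1 + x))⁻¹ := by positivity
        linarith
    have hnn : 0 ≤ Real.sqrt (max (2 * (h - x) * (1 - x ^ 2)) 0) / (1 - x ^ 2) := by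
      positivity
    calc ‖Real.sqrt (max (2 * (h - x) * (1 - x ^ 2)) 0) / (1 - x ^ 2)‖
        = Real.sqrt (max (2 * (h - x) * (1 - x ^ 2)) 0) / (1 - x ^ 2) := by
          rw [Real.norm_eq_abs, abs_of_nonneg hnn]
      _ ≤ C / Real.sqrt (1 - x ^ 2) := key
      _ ≤ _ := hbound

/-- The function `h ↦ ∫_{−1}^{1} √(max(2(h−x)(1−x²), 0))/(1−x²) dx`
tends to `+∞` as `h → +∞`. -/
theorem action_tendsto_atTop :
    Tendsto (fun h : ℝ =>
        ∫ x in (-1 : ℝ)..1, Real.sqrt (max (2 * (h - x) * (1 - x ^ 2)) 0) / (1 - x ^ 2))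
      atTop atTop := by
  set f : ℝ → ℝ → ℝ := fun h x => Real.sqrt (max (2 * (h - x) * (1 - x ^ 2)) 0) / (1 - x ^ 2)
    with hf
  have hφ : Tendsto (fun h : ℝ => Real.sqrt (2 * (h - 1) * (3/4))) atTop atTop := by
    apply tendsto_atTop_atTop.mpr
    intro b
    refine ⟨max 1 (b ^ 2 * (2/3) + 1), fun a ha => ?_⟩
    have ha1 : 1 ≤ a := le_trans (le_max_left _ _) ha
    have ha2 : b ^ 2 * (2/3) + 1 ≤ a := le_trans (le_max_right _ _) ha
    have : b ^ 2 ≤ 2 * (a - 1) * (3/4) := by nlinarith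
    calc b ≤ |b| := le_abs_self b
      _ = Real.sqrt (b ^ 2) := (Real.sqrt_sq_eq_abs b).symm
      _ ≤ _ := Real.sqrt_le_sqrt this
  apply tendsto_atTop_mono' _ _ hφ
  filter_upwards [eventually_ge_atTop (1 : ℝ)] with h hh
  -- show sqrt(2(h-1)(3/4)) ≤ ∫_{-1}^{1} f h
  have hint : IntervalIntegrable (f h) volume (-1) 1 := action_integrable h
  have hi1 : IntervalIntegrable (f h) volume (-1) (-1/2) :=
    hint.mono_set (by
      rw [Set.uIcc_of_le (by norm_num : (-1:ℝ) ≤ -1/2), Set.uIcc_of_le (by norm_num : (-1:ℝ) ≤ 1)]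
      exact Set.Icc_subset_Icc (by norm_num) (by norm_num))
  have hi2 : IntervalIntegrable (f h) volume (-1/2) (1/2) :=
    hint.mono_set (by
      rw [Set.uIcc_of_le (by norm_num : (-1/2:ℝ) ≤ 1/2), Set.uIcc_of_le (by norm_num : (-1:ℝ) ≤ 1)]
      exact Set.Icc_subset_Icc (by norm_num) (by norm_num))
  have hi3 : IntervalIntegrable (f h) volume (1/2) 1 :=
    hint.mono_set (by
      rw [Set.uIcc_of_le (by norm_num : (1/2:ℝ) ≤ 1), Set.uIcc_of_le (by norm_num : (-1:ℝ) ≤ 1)]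
      exact Set.Icc_subset_Icc (by norm_num) (by norm_num))
  have hnn : ∀ x ∈ Set.Icc (-1:ℝ) 1, 0 ≤ f h x := by
    intro x hx
    have : (0:ℝ) ≤ 1 - x ^ 2 := by nlinarith [hx.1, hx.2]
    positivity
  have split1 : (∫ x in (-1:ℝ)..(-1/2), f h x) + (∫ x in (-1/2:ℝ)..(1/2), f h x)
      = ∫ x in (-1:ℝ)..(1/2), f h x :=
    integral_add_adjacent_intervals hi1 hi2
  have split2 : (∫ x in (-1:ℝ)..(1/2), f h x) + (∫ x in (1/2:ℝ)..1, f h x)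
      = ∫ x in (-1:ℝ)..1, f h x :=
    integral_add_adjacent_intervals (hi1.trans hi2) hi3
  have pos1 : 0 ≤ ∫ x in (-1:ℝ)..(-1/2), f h x := by
    apply intervalIntegral.integral_nonneg (by norm_num)
    intro x hx
    exact hnn x ⟨hx.1, le_trans hx.2 (by norm_num)⟩
  have pos3 : 0 ≤ ∫ x in (1/2:ℝ)..1, f h x := by
    apply intervalIntegral.integral_nonneg (by norm_num)
    intro x hx
    exact hnn x ⟨le_trans (by norm_num) hx.1, hx.2⟩
  have mid : Real.sqrt (2 * (h - 1) * (3/4)) ≤ ∫ x in (-1/2:ℝ)..(1/2), f h x := by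
    have hconst : (∫ _x in (-1/2:ℝ)..(1/2), Real.sqrt (2 * (h - 1) * (3/4)))
        = Real.sqrt (2 * (h - 1) * (3/4)) := by
      rw [intervalIntegral.integral_const]
      norm_num
    rw [← hconst]
    apply integral_mono_on (by norm_num) (intervalIntegrable_const) hi2
    intro x hx
    have hx1 : -1/2 ≤ x := hx.1
    have hx2 : x ≤ 1/2 := hx.2
    have ht1 : (3/4:ℝ) ≤ 1 - x ^ 2 := by nlinarith
    have ht2 : 1 - x ^ 2 ≤ 1 := by nlinarith
    have hle : 2 * (h - 1) * (3/4) ≤ max (2 * (h - x) * (1 - x ^ 2)) 0 := by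
      apply le_max_of_le_left
      have hhx : h - 1 ≤ h - x := by linarith
      have hh1 : (0:ℝ) ≤ h - 1 := by linarith
      nlinarith
    calc Real.sqrt (2 * (h - 1) * (3/4)) ≤ Real.sqrt (max (2 * (h - x) * (1 - x ^ 2)) 0) :=
          Real.sqrt_le_sqrt hle
      _ = Real.sqrt (max (2 * (h - x) * (1 - x ^ 2)) 0) / 1 := (div_one _).symm
      _ ≤ f h x := by
          apply div_le_div_of_nonneg_left (Real.sqrt_nonneg _) (by linarith) ht2
  simp only [hf] at mid split1 split2 pos1 pos3 ⊢
  linarith
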